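/- Let ψ_h = ψ + hπ/λ for an integer h. Then I_λ evaluated at (r, ψ_h, p_r, p_ψ) equals (−1)^h times I_λ evaluated at (r, ψ, p_r, p_ψ); i.e., the first integral I_λ transforms by the sign (−1)^h under the discrete rotation ψ ↦ ψ + hπ/λ. -/

import Mathlib

/-! The potential `F(ψ) = k / sin²(λψ)` is `hπ/λ`-periodic, so `U = p_r + (1/(λr)) X_L` maps
functions that pick up a factor `s` under `ψ ↦ ψ + hπ/λ` to functions with the same property;
`cos(λψ)` has it with `s = (−1)^h`, hence so has every iterate `U^n cos(λψ)`. -/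

open Real

/- Phase space coordinates: `x 0 = r`, `x 1 = ψ`, `x 2 = p_r`, `x 3 = p_ψ`. -/

/-- Partial derivative with respect to the `i`-th coordinate. -/
noncomputable def pd (i : Fin 4) (f : (Fin 4 → ℝ) → ℝ) (x : Fin 4 → ℝ) : ℝ :=
  deriv (fun t => f (Function.update x i t)) (x i)

/-- The angular Hamiltonian `L = ½ p_ψ² + F(ψ)`. -/
noncomputable def Lfun (F : ℝ → ℝ) (x : Fin 4 → ℝ) : ℝ :=
  (1/2) * (x 3)^2 + F (x 1)

/-- The Hamiltonian vector field `X_L = p_ψ ∂/∂ψ − F'(ψ) ∂/∂p_ψ` as an operator. -/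
noncomputable def XL (F : ℝ → ℝ) (f : (Fin 4 → ℝ) → ℝ) (x : Fin 4 → ℝ) : ℝ :=
  x 3 * pd 1 f x - deriv F (x 1) * pd 3 f x

/-- The Hamiltonian `H = ½ p_r² + (½ p_ψ² + F(ψ))/r²`. -/
noncomputable def Hfun (F : ℝ → ℝ) (x : Fin 4 → ℝ) : ℝ :=
  (1/2) * (x 2)^2 + (1 / (x 0)^2) * ((1/2) * (x 3)^2 + F (x 1))

/-- The operator `U = p_r + (μ/r) X_L` (multiplication by `p_r` plus `(μ/r)·X_L`). -/
noncomputable def Uop (μ : ℝ) (F : ℝ → ℝ) (f : (Fin 4 → ℝ) → ℝ) (x : Fin 4 → ℝ) : ℝ :=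
  x 2 * f x + (μ / x 0) * XL F f x

def ScalesUnderShift (i : Fin 4) (c s : ℝ) (f : (Fin 4 → ℝ) → ℝ) : Prop :=
  ∀ y, f (Function.update y i (y i + c)) = s * f y

lemma Function.Periodic.deriv {F : ℝ → ℝ} {c : ℝ} (hF : Function.Periodic F c) :
    Function.Periodic (deriv F) c := fun t => by
  rw [← deriv_comp_add_const, hF.funext]

namespace ScalesUnderShift

variable {i : Fin 4} {c s : ℝ} {f : (Fin 4 → ℝ) → ℝ}

lemma pd_self (hf : ScalesUnderShift i c s f) : ScalesUnderShift i c s (pd i f) := fun x => by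
  have hline : (fun t => f (Function.update x i (t + c))) = fun t => s * f (Function.update x i t) :=
    funext fun t => by simpa using hf (Function.update x i t)
  simp only [pd, Function.update_self, Function.update_idem]
  rw [← deriv_comp_add_const, hline, deriv_const_mul_field]

lemma pd_of_ne {j : Fin 4} (hji : j ≠ i) (hf : ScalesUnderShift i c s f) :
    ScalesUnderShift i c s (pd j f) := fun x => by
  have hline : (fun t => f (Function.update (Function.update x i (x i + c)) j t))
      = fun t => s * f (Function.update x j t) :=
    funext fun t => by
      simpa [Function.update_comm hji.symm, Function.update_of_ne hji.symm] using
        hf (Function.update x j t)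
  simp only [pd, Function.update_of_ne hji, hline, deriv_const_mul_field]

lemma XL {F : ℝ → ℝ} (hF : Function.Periodic F c) (hf : ScalesUnderShift 1 c s f) :
    ScalesUnderShift 1 c s (XL F f) := fun x => by
  simp only [_root_.XL, Function.update_self, Function.update_of_ne (show (3 : Fin 4) ≠ 1 by decide),
    hF.deriv (x 1), hf.pd_self x, hf.pd_of_ne (show (3 : Fin 4) ≠ 1 by decide) x]
  ring

lemma Uop (μ : ℝ) {F : ℝ → ℝ} (hF : Function.Periodic F c) (hf : ScalesUnderShift 1 c s f) :
    ScalesUnderShift 1 c s (Uop μ F f) := fun x => by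
  simp only [_root_.Uop, Function.update_of_ne (show (0 : Fin 4) ≠ 1 by decide),
    Function.update_of_ne (show (2 : Fin 4) ≠ 1 by decide), hf x, (hf.XL hF) x]
  ring

end ScalesUnderShift

lemma cos_scalesUnderShift (lam : ℕ) (hlam : 0 < lam) (h : ℤ) :
    ScalesUnderShift 1 (h * π / lam) ((-1) ^ h) (fun y => cos (lam * y 1)) := fun y => by
  have hlam' : (lam : ℝ) ≠ 0 := by positivity
  simp only [Function.update_self]
  rw [mul_add, mul_div_cancel₀ _ hlam', cos_add_int_mul_pi]

lemma periodic_div_sin_sq (lam : ℕ) (hlam : 0 < lam) (k : ℝ) (h : ℤ) :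
    Function.Periodic (fun ψ => k / (sin (lam * ψ)) ^ 2) (h * π / lam) := fun ψ => by
  have hlam' : (lam : ℝ) ≠ 0 := by positivity
  dsimp only
  rw [mul_add, mul_div_cancel₀ _ hlam', sin_add_int_mul_pi, mul_pow, sq ((-1 : ℝ) ^ h),
    ← mul_zpow]
  norm_num

theorem dihedral_symmetry_of_integral_general (lam : ℕ) (hlam : 0 < lam) (k : ℝ) (h : ℤ)
    (x : Fin 4 → ℝ) :
    ((Uop (1 / lam) (fun ψ => k / (sin (lam * ψ))^2))^[lam]
        (fun y => cos (lam * y 1)))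
      (Function.update x 1 (x 1 + h * π / lam))
    = (-1 : ℝ)^h *
      ((Uop (1 / lam) (fun ψ => k / (sin (lam * ψ))^2))^[lam]
        (fun y => cos (lam * y 1))) x := by
  have hU : Set.MapsTo (Uop (1 / lam) (fun ψ => k / (sin (lam * ψ)) ^ 2))
      {f | ScalesUnderShift 1 (h * π / lam) ((-1) ^ h) f}
      {f | ScalesUnderShift 1 (h * π / lam) ((-1) ^ h) f} :=
    fun _ hf => ScalesUnderShift.Uop _ (periodic_div_sin_sq lam hlam k h) hf
  exact hU.iterate lam (cos_scalesUnderShift lam hlam h) x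

/-- Under the discrete rotation `ψ ↦ ψ + hπ/λ`, the first integral
`I_λ = (p_r + (1/(λr))X_L)^λ cos(λψ)` (with `F(ψ) = k/sin²(λψ)`) transforms by the
sign `(−1)^h`. -/
theorem dihedral_symmetry_of_integral (lam : ℕ) (hlam : 0 < lam) (k : ℝ) (h : ℤ)
    (x : Fin 4 → ℝ) (hr : 0 < x 0) (hs : sin (lam * x 1) ≠ 0) :
    ((Uop (1 / lam) (fun ψ => k / (sin (lam * ψ))^2))^[lam]
        (fun y => cos (lam * y 1)))
      (Function.update x 1 (x 1 + h * π / lam))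
    = (-1 : ℝ)^h *
      ((Uop (1 / lam) (fun ψ => k / (sin (lam * ψ))^2))^[lam]
        (fun y => cos (lam * y 1))) x :=
  dihedral_symmetry_of_integral_general lam hlam k h x
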